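/- arXiv:2301.01447 — 2 statements merged into one kernel-verified Lean document; each statement's English description precedes it below -/
import Mathlib

section
/- Let X ~ N(x̄, σ²·Id) and Y ~ N(ȳ, σ²·Id) be k-dimensional Gaussian random variables forming a maximal coupling. Then there exists a constant c_k > 0 depending only on k such that E[|X − Y|] ≤ c_k·σ + 2·|x̄ − ȳ|. -/
open MeasureTheory ProbabilityTheory

/-- The Gaussian measure `N(m, σ²·Id)` on `ℝ^k` (product of one-dimensional Gaussians). -/
noncomputable def gaussianPi (k : ℕ) (m : Fin k → ℝ) (σ : ℝ) : Measure (Fin k → ℝ) :=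
  Measure.pi fun i => gaussianReal (m i) ⟨σ ^ 2, sq_nonneg σ⟩

/-- Total variation distance `TV(μ₁, μ₂) = 2 · sup_A |μ₁(A) − μ₂(A)|`. -/
noncomputable def tvDist {E : Type*} [MeasurableSpace E] (μ₁ μ₂ : Measure E) : ℝ :=
  2 * ⨆ A : {A : Set E // MeasurableSet A}, |(μ₁ A.1).toReal - (μ₂ A.1).toReal|

/-- Euclidean norm on `Fin k → ℝ`. -/
noncomputable def euclNorm {k : ℕ} (x : Fin k → ℝ) : ℝ :=
  Real.sqrt (∑ i, x i ^ 2)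

open scoped NNReal ENNReal Real

section Aux

/-- marginal of a pi measure of probability measures -/
lemma pi_map_eval_aux {ι : Type*} [Fintype ι] {α : ι → Type*} [∀ i, MeasurableSpace (α i)]
    (μ : ∀ i, Measure (α i)) [∀ i, IsProbabilityMeasure (μ i)] (i : ι) :
    (Measure.pi μ).map (Function.eval i) = μ i := by
  classical
  ext s hs
  rw [Measure.map_apply (measurable_pi_apply i) hs, Set.eval_preimage, Measure.pi_pi]
  rw [Fintype.prod_eq_single i]
  · simp
  · intro j hj; simp [Function.update_of_ne hj]

lemma integrable_id_gauss_aux (m : ℝ) (v : ℝ≥0) (hv : v ≠ 0) :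
    Integrable (fun x => x) (gaussianReal m v) := by
  rw [gaussianReal_of_var_ne_zero _ hv]
  rw [integrable_withDensity_iff (measurable_gaussianPDF _ _)
    (ae_of_all _ fun x => ENNReal.ofReal_lt_top)]
  have hrw : (fun x => x * (gaussianPDF m v x).toReal)
      = fun x => ((x - m) * gaussianPDFReal m v x) + m * gaussianPDFReal m v x := by
    ext x
    rw [gaussianPDF, ENNReal.toReal_ofReal (gaussianPDFReal_nonneg _ _ _)]
    ring
  rw [hrw]
  have hv' : (v : ℝ) ≠ 0 := by exact_mod_cast hv
  have hb : (0 : ℝ) < (2 * (v : ℝ))⁻¹ := by positivity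
  have h1 : Integrable (fun x : ℝ => (x - m) * gaussianPDFReal m v x) := by
    have key : Integrable (fun x : ℝ =>
        (Real.sqrt (2 * Real.pi * v))⁻¹ *
          ((x - m) * Real.exp (-(2 * (v : ℝ))⁻¹ * (x - m) ^ 2))) :=
      ((integrable_mul_exp_neg_mul_sq hb).comp_sub_right m).const_mul _
    refine key.congr (ae_of_all _ fun x => ?_)
    simp only [gaussianPDFReal_def]
    rw [show -(x - m) ^ 2 / (2 * (v : ℝ)) = -(2 * (v : ℝ))⁻¹ * (x - m) ^ 2 by
      rw [neg_div, div_eq_mul_inv, neg_mul, mul_comm]]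
    ring
  have h2 : Integrable (fun x : ℝ => m * gaussianPDFReal m v x) :=
    (integrable_gaussianPDFReal m v).const_mul m
  exact h1.add h2

lemma integrable_abs_gauss_aux (m : ℝ) (v : ℝ≥0) (hv : v ≠ 0) :
    Integrable (fun x => |x - m|) (gaussianReal m v) :=
  ((integrable_id_gauss_aux m v hv).sub (integrable_const m)).abs

/-- the mean absolute value of a standard Gaussian. -/
noncomputable def gaussAbsInt : ℝ := ∫ x, |x| ∂(gaussianReal 0 1)

lemma gaussAbsInt_nonneg : 0 ≤ gaussAbsInt :=
  integral_nonneg fun x => abs_nonneg x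

lemma nnreal_sq_ne_zero {σ : ℝ} (hσ : 0 < σ) :
    (⟨σ ^ 2, sq_nonneg σ⟩ : ℝ≥0) ≠ 0 := by
  intro h
  have := congrArg NNReal.toReal h
  change σ ^ 2 = 0 at this
  exact (pow_ne_zero 2 hσ.ne') this

lemma integral_abs_gauss_aux (m σ : ℝ) (hσ : 0 < σ) :
    ∫ x, |x - m| ∂(gaussianReal m ⟨σ ^ 2, sq_nonneg σ⟩) = σ * gaussAbsInt := by
  have h1 : (gaussianReal 0 (⟨σ ^ 2, sq_nonneg σ⟩ : ℝ≥0)).map (· + m)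
      = gaussianReal m (⟨σ ^ 2, sq_nonneg σ⟩ : ℝ≥0) := by
    have := gaussianReal_map_add_const (μ := 0) (v := ⟨σ ^ 2, sq_nonneg σ⟩) m
    rw [zero_add] at this; exact this
  rw [← h1, integral_map (f := fun t : ℝ => |t - m|) (measurable_id'.add_const m).aemeasurable
    ((measurable_id.sub_const m).abs.aestronglyMeasurable)]
  simp only [add_sub_cancel_right]
  have h2 : (gaussianReal 0 1).map (σ * ·) = gaussianReal 0 (⟨σ ^ 2, sq_nonneg σ⟩ : ℝ≥0) := by
    rw [gaussianReal_map_const_mul, mul_zero, mul_one]; rfl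
  rw [← h2, integral_map (f := fun t : ℝ => |t|) (measurable_const_mul σ).aemeasurable
    measurable_abs.aestronglyMeasurable]
  simp only [abs_mul, abs_of_pos hσ]
  rw [integral_const_mul]
  rfl

lemma euclNorm_eq_norm {k : ℕ} (x : Fin k → ℝ) :
    euclNorm x = ‖(WithLp.equiv 2 (Fin k → ℝ)).symm x‖ := by
  rw [EuclideanSpace.norm_eq]
  simp [euclNorm, sq_abs]

lemma euclNorm_nonneg {k : ℕ} (x : Fin k → ℝ) : 0 ≤ euclNorm x :=
  Real.sqrt_nonneg _

lemma euclNorm_add_le {k : ℕ} (a b : Fin k → ℝ) :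
    euclNorm (a + b) ≤ euclNorm a + euclNorm b := by
  rw [euclNorm_eq_norm, euclNorm_eq_norm, euclNorm_eq_norm]
  simp only [WithLp.equiv_symm_apply, WithLp.toLp_add]
  exact norm_add_le _ _

lemma euclNorm_sub_rev {k : ℕ} (a b : Fin k → ℝ) :
    euclNorm (a - b) = euclNorm (b - a) := by
  rw [euclNorm_eq_norm, euclNorm_eq_norm]
  simp only [WithLp.equiv_symm_apply, WithLp.toLp_sub]
  rw [norm_sub_rev]

lemma euclNorm_le_sum_abs {k : ℕ} (x : Fin k → ℝ) :
    euclNorm x ≤ ∑ i, |x i| := by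
  rw [euclNorm, show (∑ i, x i ^ 2) = ∑ i, |x i| ^ 2 by simp [sq_abs]]
  calc Real.sqrt (∑ i, |x i| ^ 2) ≤ Real.sqrt ((∑ i, |x i|) ^ 2) := by
        apply Real.sqrt_le_sqrt
        exact Finset.sum_sq_le_sq_sum_of_nonneg (fun i _ => abs_nonneg _)
    _ = ∑ i, |x i| := Real.sqrt_sq (Finset.sum_nonneg fun i _ => abs_nonneg _)

end Aux

/-- For every dimension `k` there is a constant `c_k > 0`, depending only on `k`, such
that for every maximal coupling `(X, Y)` of `N(x̄, σ²·Id)` and `N(ȳ, σ²·Id)` on `ℝ^k`,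
`E[|X − Y|] ≤ c_k·σ + 2·|x̄ − ȳ|`. -/
theorem maximal_coupling_gaussian_expectation_bound (k : ℕ) :
    ∃ c : ℝ, 0 < c ∧
      ∀ (xb yb : Fin k → ℝ) (σ : ℝ), 0 < σ →
      ∀ {Ω : Type} [MeasurableSpace Ω] (P : Measure Ω), IsProbabilityMeasure P →
      ∀ (X Y : Ω → (Fin k → ℝ)), Measurable X → Measurable Y →
      Measure.map X P = gaussianPi k xb σ → Measure.map Y P = gaussianPi k yb σ →
      -- `(X, Y)` is a maximal coupling:
      (P {ω | X ω ≠ Y ω}).toReal = tvDist (gaussianPi k xb σ) (gaussianPi k yb σ) / 2 →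
      ∫ ω, euclNorm (X ω - Y ω) ∂P ≤ c * σ + 2 * euclNorm (xb - yb) := by
  refine ⟨2 * k * gaussAbsInt + 1, by have := gaussAbsInt_nonneg; positivity, ?_⟩
  intro xb yb σ hσ Ω _ P hP X Y hX hY hmapX hmapY _hmax
  have hP' := hP
  -- component-wise facts
  have key : ∀ (Z : Ω → Fin k → ℝ) (zb : Fin k → ℝ), Measurable Z →
      Measure.map Z P = gaussianPi k zb σ → ∀ i : Fin k,
      Integrable (fun ω => |Z ω i - zb i|) P ∧
        ∫ ω, |Z ω i - zb i| ∂P = σ * gaussAbsInt := by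
    intro Z zb hZ hmapZ i
    have hg : Measurable fun u : Fin k → ℝ => |u i - zb i| :=
      ((measurable_pi_apply i).sub_const _).abs
    have hmarg : (gaussianPi k zb σ).map (Function.eval i)
        = gaussianReal (zb i) ⟨σ ^ 2, sq_nonneg σ⟩ :=
        @pi_map_eval_aux _ _ _ _ _ (fun j => (inferInstance :
          IsProbabilityMeasure (gaussianReal (zb j) (NNReal.mk (σ ^ 2) (sq_nonneg σ))))) i
    have hint_pi : Integrable (fun u : Fin k → ℝ => |u i - zb i|) (gaussianPi k zb σ) := by
      have := integrable_abs_gauss_aux (zb i) ⟨σ ^ 2, sq_nonneg σ⟩ (nnreal_sq_ne_zero hσ)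
      rw [← hmarg] at this
      exact (integrable_map_measure ((measurable_id.sub_const _).abs.aestronglyMeasurable)
        (measurable_pi_apply i).aemeasurable).mp this
    have hintP : Integrable (fun ω => |Z ω i - zb i|) P := by
      have : Integrable (fun u : Fin k → ℝ => |u i - zb i|) (Measure.map Z P) := by
        rw [hmapZ]; exact hint_pi
      exact (integrable_map_measure hg.aestronglyMeasurable hZ.aemeasurable).mp this
    refine ⟨hintP, ?_⟩
    have h1 : ∫ ω, |Z ω i - zb i| ∂P
        = ∫ u, |u i - zb i| ∂(gaussianPi k zb σ) := by
      rw [← hmapZ, integral_map hZ.aemeasurable hg.aestronglyMeasurable]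
    have hev : Measurable (Function.eval i : (Fin k → ℝ) → ℝ) := measurable_pi_apply i
    have hsm : AEStronglyMeasurable (fun t : ℝ => |t - zb i|)
        ((gaussianPi k zb σ).map (Function.eval i)) :=
      (measurable_id.sub_const _).abs.aestronglyMeasurable
    have h2 : ∫ u : Fin k → ℝ, |u i - zb i| ∂(gaussianPi k zb σ)
        = ∫ t, |t - zb i| ∂((gaussianPi k zb σ).map (Function.eval i)) :=
      (integral_map hev.aemeasurable hsm).symm
    rw [h1, h2, hmarg, integral_abs_gauss_aux _ _ hσ]
  obtain hXkey := fun i => key X xb hX hmapX i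
  obtain hYkey := fun i => key Y yb hY hmapY i
  -- pointwise bound
  have hpt : ∀ ω, euclNorm (X ω - Y ω)
      ≤ (∑ i, |X ω i - xb i|) + ((∑ i, |Y ω i - yb i|) + euclNorm (xb - yb)) := by
    intro ω
    have hsplit : X ω - Y ω = (X ω - xb) + ((xb - yb) + (yb - Y ω)) := by abel
    calc euclNorm (X ω - Y ω)
        ≤ euclNorm (X ω - xb) + euclNorm ((xb - yb) + (yb - Y ω)) := by
          rw [hsplit]; exact euclNorm_add_le _ _
      _ ≤ euclNorm (X ω - xb) + (euclNorm (xb - yb) + euclNorm (yb - Y ω)) := by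
          gcongr; exact euclNorm_add_le _ _
      _ ≤ (∑ i, |X ω i - xb i|) + ((∑ i, |Y ω i - yb i|) + euclNorm (xb - yb)) := by
          rw [euclNorm_sub_rev yb (Y ω)]
          have h1 : euclNorm (X ω - xb) ≤ ∑ i, |X ω i - xb i| := by
            simpa using euclNorm_le_sum_abs (X ω - xb)
          have h2 : euclNorm (Y ω - yb) ≤ ∑ i, |Y ω i - yb i| := by
            simpa using euclNorm_le_sum_abs (Y ω - yb)
          linarith
  -- integrability of the dominating function
  have hintX : Integrable (fun ω => ∑ i, |X ω i - xb i|) P :=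
    integrable_finset_sum _ fun i _ => (hXkey i).1
  have hintY : Integrable (fun ω => ∑ i, |Y ω i - yb i|) P :=
    integrable_finset_sum _ fun i _ => (hYkey i).1
  have hintYc : Integrable
      (fun ω => (∑ i, |Y ω i - yb i|) + euclNorm (xb - yb)) P :=
    hintY.add (integrable_const _)
  have hintG : Integrable (fun ω =>
      (∑ i, |X ω i - xb i|) + ((∑ i, |Y ω i - yb i|) + euclNorm (xb - yb))) P :=
    hintX.add (hintY.add (integrable_const _))
  have hmono : ∫ ω, euclNorm (X ω - Y ω) ∂P
      ≤ ∫ ω, ((∑ i, |X ω i - xb i|) + ((∑ i, |Y ω i - yb i|) + euclNorm (xb - yb))) ∂P :=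
    integral_mono_of_nonneg (ae_of_all _ fun ω => euclNorm_nonneg _) hintG
      (ae_of_all _ hpt)
  have hval : ∫ ω, ((∑ i, |X ω i - xb i|) + ((∑ i, |Y ω i - yb i|) + euclNorm (xb - yb))) ∂P
      = k * (σ * gaussAbsInt) + (k * (σ * gaussAbsInt) + euclNorm (xb - yb)) := by
    rw [integral_add hintX hintYc,
      integral_add hintY (integrable_const _),
      integral_finset_sum _ fun i _ => (hXkey i).1,
      integral_finset_sum _ fun i _ => (hYkey i).1, integral_const]
    simp only [(hXkey _).2, (hYkey _).2]
    simp [mul_comm]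
  have hnorm_nonneg : 0 ≤ euclNorm (xb - yb) := euclNorm_nonneg _
  have hC := gaussAbsInt_nonneg
  calc ∫ ω, euclNorm (X ω - Y ω) ∂P
      ≤ k * (σ * gaussAbsInt) + (k * (σ * gaussAbsInt) + euclNorm (xb - yb)) := by
        rw [← hval]; exact hmono
    _ ≤ (2 * k * gaussAbsInt + 1) * σ + 2 * euclNorm (xb - yb) := by nlinarith
end

section
/- Let U : D → ℝ be a multi-well potential on a connected open set D ⊆ ℝ^k with finitely many local minima x₁, …, x_L, labeled so that x₁ is the unique global minimum. Define the communication height Φ(A,B) = inf over continuous paths φ : [0,1] → D with φ(0) ∈ A, φ(1) ∈ B of sup_{t∈[0,1]} U(φ(t)), and write M_i = {x₁,…,x_i}. Then max_{2 ≤ i ≤ L} (Φ(x_i, x₁) − U(x_i)) = max_{2 ≤ i ≤ L} (Φ(x_i, M_{i−1}) − U(x_i)), where the local minima are labeled with U(x₁) < U(x₂) < … < U(x_L). -/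
open Set

variable {k : ℕ}

/-- Communication height `Φ(x, S)` between a point `x` and a set `S` inside a domain `D`:
the infimum over continuous paths `φ : [0,1] → D` with `φ(0) = x`, `φ(1) ∈ S` of
`sup_{t ∈ [0,1]} U(φ(t))`. -/
noncomputable def commHeight (D : Set (Fin k → ℝ)) (U : (Fin k → ℝ) → ℝ)
    (x : Fin k → ℝ) (S : Set (Fin k → ℝ)) : ℝ :=
  sInf {M : ℝ | ∃ φ : ℝ → (Fin k → ℝ), ContinuousOn φ (Icc 0 1) ∧
    (∀ t ∈ Icc (0 : ℝ) 1, φ t ∈ D) ∧ φ 0 = x ∧ φ 1 ∈ S ∧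
    M = sSup (U '' (φ '' Icc 0 1))}

namespace EBH

def hset (D : Set (Fin k → ℝ)) (U : (Fin k → ℝ) → ℝ)
    (x : Fin k → ℝ) (S : Set (Fin k → ℝ)) : Set ℝ :=
  {M : ℝ | ∃ φ : ℝ → (Fin k → ℝ), ContinuousOn φ (Icc 0 1) ∧
    (∀ t ∈ Icc (0 : ℝ) 1, φ t ∈ D) ∧ φ 0 = x ∧ φ 1 ∈ S ∧
    M = sSup (U '' (φ '' Icc 0 1))}

lemma commHeight_def (D : Set (Fin k → ℝ)) (U : (Fin k → ℝ) → ℝ)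
    (x : Fin k → ℝ) (S : Set (Fin k → ℝ)) :
    commHeight D U x S = sInf (hset D U x S) := rfl

variable {D : Set (Fin k → ℝ)} {U : (Fin k → ℝ) → ℝ}

lemma hset_iff {x : Fin k → ℝ} {S : Set (Fin k → ℝ)} {M : ℝ} :
    M ∈ hset D U x S ↔
      ∃ z ∈ S, ∃ γ : Path x z, (∀ t, γ t ∈ D) ∧ M = sSup (U '' range γ) := by
  constructor
  · rintro ⟨φ, hc, hmem, h0, h1, rfl⟩
    refine ⟨φ 1, h1, ⟨⟨(Icc (0:ℝ) 1).restrict φ, continuousOn_iff_continuous_restrict.mp hc⟩,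
        ?_, ?_⟩, fun t => hmem t t.2, ?_⟩
    · exact h0
    · simp [Set.restrict]
    · exact congrArg (fun s => sSup (U '' s)) (range_restrict φ (Icc 0 1)).symm
  · rintro ⟨z, hz, γ, hγD, rfl⟩
    refine ⟨fun t => γ (projIcc (0:ℝ) 1 zero_le_one t),
      (γ.continuous.comp continuous_projIcc).continuousOn,
      fun t _ => hγD _, ?_, ?_, ?_⟩
    · simp
    · simpa using hz
    · have himg : (fun t => γ (projIcc (0:ℝ) 1 zero_le_one t)) '' Icc 0 1 = range ⇑γ := by
        ext y
        constructor
        · rintro ⟨t, _, rfl⟩; exact ⟨_, rfl⟩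
        · rintro ⟨s, rfl⟩
          exact ⟨(s : ℝ), s.2, by simp only []; rw [projIcc_of_mem zero_le_one s.2]⟩
      rw [himg]


lemma image_compact (hUc : ContinuousOn U D) {x z : Fin k → ℝ} (γ : Path x z)
    (hγD : ∀ t, γ t ∈ D) : IsCompact (U '' range ⇑γ) :=
  (isCompact_range γ.continuous).image_of_continuousOn
    (hUc.mono (range_subset_iff.mpr hγD))

lemma mem_lb (hUc : ContinuousOn U D) {x : Fin k → ℝ} {S : Set (Fin k → ℝ)} {M : ℝ}
    (hM : M ∈ hset D U x S) : U x ≤ M := by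
  obtain ⟨z, hz, γ, hγD, rfl⟩ := hset_iff.mp hM
  exact le_csSup (image_compact hUc γ hγD).bddAbove ⟨γ 0, ⟨0, rfl⟩, by rw [γ.source]⟩

lemma hset_bddBelow (hUc : ContinuousOn U D) (x : Fin k → ℝ) (S : Set (Fin k → ℝ)) :
    BddBelow (hset D U x S) :=
  ⟨U x, fun _ hM => mem_lb hUc hM⟩

lemma hset_nonempty (hDconv : Convex ℝ D) {x : Fin k → ℝ} (hx : x ∈ D)
    {S : Set (Fin k → ℝ)} {z : Fin k → ℝ} (hzD : z ∈ D) (hzS : z ∈ S) :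
    (hset D U x S).Nonempty := by
  obtain ⟨γ, hγ⟩ := (hDconv.isPathConnected ⟨x, hx⟩).joinedIn x hx z hzD
  exact ⟨_, hset_iff.mpr ⟨z, hzS, γ, hγ, rfl⟩⟩

lemma mem_max (hUc : ContinuousOn U D) {x y : Fin k → ℝ} {S : Set (Fin k → ℝ)} {M₁ M₂ : ℝ}
    (h₁ : M₁ ∈ hset D U x {y}) (h₂ : M₂ ∈ hset D U y S) : max M₁ M₂ ∈ hset D U x S := by
  obtain ⟨z₁, hz₁, γ₁, hγ₁, rfl⟩ := hset_iff.mp h₁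
  obtain rfl : z₁ = y := hz₁
  obtain ⟨z₂, hz₂, γ₂, hγ₂, rfl⟩ := hset_iff.mp h₂
  refine hset_iff.mpr ⟨z₂, hz₂, γ₁.trans γ₂, ?_, ?_⟩
  · intro t
    have ht : (γ₁.trans γ₂) t ∈ range ⇑γ₁ ∪ range ⇑γ₂ := by
      rw [← Path.trans_range]; exact ⟨t, rfl⟩
    rcases ht with ⟨s, hs⟩ | ⟨s, hs⟩
    · rw [← hs]; exact hγ₁ s
    · rw [← hs]; exact hγ₂ s
  · rw [Path.trans_range, image_union,
      csSup_union (image_compact hUc γ₁ hγ₁).bddAbove ((range_nonempty _).image U)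
        (image_compact hUc γ₂ hγ₂).bddAbove ((range_nonempty _).image U)]

end EBH

open EBH

/-- For a multi-well potential `U` on a connected open convex `D ⊆ ℝ^k` with local minima
`x₀, …, x_{L−1}` labeled with strictly increasing values (`x₀` the unique global minimum),
the essential barrier height satisfies
`max_{i ≠ 0} (Φ(x_i, x₀) − U(x_i)) = max_{i ≠ 0} (Φ(x_i, {x₀,…,x_{i−1}}) − U(x_i))`. -/
theorem essential_barrier_height_eq
    (D : Set (Fin k → ℝ)) (hD : IsOpen D) (hDconv : Convex ℝ D)
    (hDconn : IsConnected D)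
    (U : (Fin k → ℝ) → ℝ) (hU : ContDiffOn ℝ 3 U D)
    (L : ℕ) (hL : 2 ≤ L) (x : Fin L → (Fin k → ℝ))
    (hxD : ∀ i, x i ∈ D)
    (hmin : ∀ i, IsLocalMin U (x i))
    (hmono : StrictMono fun i => U (x i))
    (i₀ : Fin L) (hi₀ : (i₀ : ℕ) = 0) :
    (⨆ i : {i : Fin L // i ≠ i₀}, (commHeight D U (x i.1) {x i₀} - U (x i.1)))
      = ⨆ i : {i : Fin L // i ≠ i₀},
          (commHeight D U (x i.1) {y | ∃ j : Fin L, j < i.1 ∧ y = x j} - U (x i.1)) := by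
  have hUc : ContinuousOn U D := hU.continuousOn
  have hi₀lt : ∀ i : Fin L, i ≠ i₀ → i₀ < i := by
    intro i hi
    have h1 : (i : ℕ) ≠ 0 := fun h => hi (Fin.ext (h.trans hi₀.symm))
    exact Fin.lt_def.mpr (by omega)
  have : Nonempty {i : Fin L // i ≠ i₀} :=
    ⟨⟨⟨1, by omega⟩, fun h => by
      have := congrArg Fin.val h; simp [hi₀] at this⟩⟩
  have hbA : BddAbove (range fun i : {i : Fin L // i ≠ i₀} =>
      commHeight D U (x i.1) {x i₀} - U (x i.1)) := (finite_range _).bddAbove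
  have hbB : BddAbove (range fun i : {i : Fin L // i ≠ i₀} =>
      commHeight D U (x i.1) {y | ∃ j : Fin L, j < i.1 ∧ y = x j} - U (x i.1)) :=
    (finite_range _).bddAbove
  -- pointwise: B ≤ A (bigger target set gives smaller infimum)
  have h1 : ∀ i : {i : Fin L // i ≠ i₀},
      commHeight D U (x i.1) {y | ∃ j : Fin L, j < i.1 ∧ y = x j} - U (x i.1)
        ≤ commHeight D U (x i.1) {x i₀} - U (x i.1) := by
    intro i
    apply sub_le_sub_right
    rw [commHeight_def, commHeight_def]
    refine csInf_le_csInf (hset_bddBelow hUc _ _)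
      (hset_nonempty hDconv (hxD _) (hxD i₀) rfl) ?_
    rintro M ⟨φ, hc, hm, h0, hend, hsup⟩
    exact ⟨φ, hc, hm, h0, ⟨i₀, hi₀lt _ i.2, hend⟩, hsup⟩
  have claim : ∀ n : ℕ, ∀ i : Fin L, (i : ℕ) ≤ n → i ≠ i₀ →
      commHeight D U (x i) {x i₀} - U (x i)
        ≤ ⨆ i : {i : Fin L // i ≠ i₀},
            (commHeight D U (x i.1) {y | ∃ j : Fin L, j < i.1 ∧ y = x j} - U (x i.1)) := by
    intro n
    induction n with
    | zero =>
      intro i hi hne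
      exact absurd (Fin.ext (by omega : (i : ℕ) = (i₀ : ℕ))) hne
    | succ n ih =>
      intro i hin hne
      rcases le_or_gt (i : ℕ) n with h | h
      · exact ih i h hne
      have hival : (i : ℕ) = n + 1 := by omega
      refine le_of_forall_pos_le_add ?_
      intro ε hε
      have hne1 : (hset D U (x i) {y | ∃ j : Fin L, j < i ∧ y = x j}).Nonempty :=
        hset_nonempty hDconv (hxD i) (hxD i₀) ⟨i₀, hi₀lt i hne, rfl⟩
      obtain ⟨M₁, hM₁mem, hM₁lt⟩ := Real.lt_sInf_add_pos hne1 hε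
      obtain ⟨φ, hc, hm, h0, hend, hsup⟩ := hM₁mem
      obtain ⟨j, hji, hj⟩ := hend
      have hM₁' : M₁ ∈ hset D U (x i) {x j} := ⟨φ, hc, hm, h0, hj, hsup⟩
      -- B i ≤ sup B
      have hBile : commHeight D U (x i) {y | ∃ j : Fin L, j < i ∧ y = x j} - U (x i)
          ≤ ⨆ i : {i : Fin L // i ≠ i₀},
              (commHeight D U (x i.1) {y | ∃ j : Fin L, j < i.1 ∧ y = x j} - U (x i.1)) :=
        le_ciSup hbB ⟨i, hne⟩
      have hM₁bound : M₁ < commHeight D U (x i) {y | ∃ j : Fin L, j < i ∧ y = x j} + ε := by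
        rw [commHeight_def]; exact hM₁lt
      by_cases hji₀ : j = i₀
      · subst hji₀
        have hle : commHeight D U (x i) {x j} ≤ M₁ :=
          csInf_le (hset_bddBelow hUc _ _) hM₁'
        have := hle.trans_lt hM₁bound
        linarith
      · -- pick near-optimal path from x j to x i₀
        have hne2 : (hset D U (x j) ({x i₀} : Set (Fin k → ℝ))).Nonempty :=
          hset_nonempty hDconv (hxD j) (hxD i₀) rfl
        obtain ⟨M₂, hM₂mem, hM₂lt⟩ := Real.lt_sInf_add_pos hne2 hε
        have hmax : max M₁ M₂ ∈ hset D U (x i) ({x i₀} : Set (Fin k → ℝ)) :=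
          mem_max hUc hM₁' hM₂mem
        have hle : commHeight D U (x i) {x i₀} ≤ max M₁ M₂ :=
          csInf_le (hset_bddBelow hUc _ _) hmax
        have hAj : commHeight D U (x j) {x i₀} - U (x j)
            ≤ ⨆ i : {i : Fin L // i ≠ i₀},
                (commHeight D U (x i.1) {y | ∃ j : Fin L, j < i.1 ∧ y = x j} - U (x i.1)) :=
          ih j (by have := Fin.lt_def.mp hji; omega) hji₀
        have hUji : U (x j) < U (x i) := hmono hji
        have hM₂bound : M₂ < commHeight D U (x j) {x i₀} + ε := by
          rw [commHeight_def]; exact hM₂lt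
        rcases max_cases M₁ M₂ with ⟨hmx, _⟩ | ⟨hmx, _⟩ <;> rw [hmx] at hle <;> linarith
  apply le_antisymm
  · exact ciSup_le fun i => claim i.1 i.1 le_rfl i.2
  · exact ciSup_le fun i => (h1 i).trans (le_ciSup hbA i)
end
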